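/- The squared L² norm of the k-fold Gaussian heat-kernel product ϱ_k(t,x) = ∏_{j=1}^k ϱ(t_j - t_{j-1}, x_j - x_{j-1}) over Δ_k × ℝ^k equals 1/(2^k · Γ(k/2 + 1)). -/

import Mathlib

open MeasureTheory Real

/-- The one-dimensional Gaussian heat kernel. -/
noncomputable def heatKernel (t x : ℝ) : ℝ :=
  Real.exp (-x ^ 2 / (2 * t)) / Real.sqrt (2 * Real.pi * t)

/-- The previous coordinate of `t` at index `j`, with the convention `t₀ = 0`. -/
def prevCoord {k : ℕ} (t : Fin k → ℝ) (j : Fin k) : ℝ :=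
  if _h : 0 < (j : ℕ) then t ⟨(j : ℕ) - 1, lt_of_le_of_lt (Nat.sub_le _ _) j.isLt⟩ else 0

/-- The ordered simplex `Δ_k = {0 < t₁ < t₂ < ... < t_k ≤ 1}`. -/
def orderedSimplex (k : ℕ) : Set (Fin k → ℝ) :=
  {t | (∀ j : Fin k, prevCoord t j < t j) ∧ ∀ j : Fin k, t j ≤ 1}

/-- The `k`-fold heat kernel product `ϱ_k(t,x) = ∏_j ϱ(t_j - t_{j-1}, x_j - x_{j-1})`
(with `t₀ = 0`, `x₀ = 0`). -/
noncomputable def heatKernelProd (k : ℕ) (t x : Fin k → ℝ) : ℝ :=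
  ∏ j : Fin k, heatKernel (t j - prevCoord t j) (x j - prevCoord x j)

open scoped ENNReal

lemma prevCoord_zero {k : ℕ} (t : Fin (k+1) → ℝ) : prevCoord t 0 = 0 := by
  simp [prevCoord]

lemma prevCoord_mk_zero {k : ℕ} (t : Fin k → ℝ) (h : 0 < k) :
    prevCoord t ⟨0, h⟩ = 0 := by
  simp [prevCoord]

lemma prevCoord_mk_succ {k : ℕ} (t : Fin k → ℝ) (m : ℕ) (h : m + 1 < k) :
    prevCoord t ⟨m+1, h⟩ = t ⟨m, by omega⟩ := by
  rw [prevCoord, dif_pos (by simp)]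
  rfl

lemma cons_mk_succ {k : ℕ} (a : ℝ) (r : Fin k → ℝ) (m : ℕ) (h : m + 1 < k + 1) :
    (Fin.cons a r : Fin (k+1) → ℝ) ⟨m+1, h⟩ = r ⟨m, by omega⟩ := by
  have h2 := Fin.cons_succ (α := fun _ : Fin (k+1) => ℝ) a r ⟨m, Nat.succ_lt_succ_iff.mp h⟩
  exact h2

lemma cons_sub_zero {k : ℕ} (a : ℝ) (r : Fin k → ℝ) :
    (Fin.cons a r : Fin (k+1) → ℝ) 0 - prevCoord (Fin.cons a r : Fin (k+1) → ℝ) 0 = a := by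
  rw [prevCoord_zero, Fin.cons_zero, sub_zero]

lemma cons_sub_succ {k : ℕ} (a : ℝ) (r : Fin k → ℝ) (i : Fin k) :
    (Fin.cons a r : Fin (k+1) → ℝ) i.succ - prevCoord (Fin.cons a r : Fin (k+1) → ℝ) i.succ
      = (r i - a) - prevCoord (fun m => r m - a) i := by
  rcases i with ⟨iv, hiv⟩
  have hs : (Fin.succ ⟨iv, hiv⟩ : Fin (k+1)) = ⟨iv+1, by omega⟩ := rfl
  rw [Fin.cons_succ, hs, prevCoord_mk_succ _ iv (by omega)]
  cases iv with
  | zero =>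
    have : ((⟨0, by omega⟩ : Fin (k+1))) = 0 := rfl
    rw [this, Fin.cons_zero, prevCoord_mk_zero _ hiv, sub_zero]
  | succ m =>
    rw [cons_mk_succ, prevCoord_mk_succ _ m hiv]
    ring

lemma hsymm {k : ℕ} (a : ℝ) (r : Fin k → ℝ) :
    (MeasurableEquiv.piFinSuccAbove (fun _ : Fin (k+1) => ℝ) 0).symm (a, r)
      = (Fin.cons a r : Fin (k+1) → ℝ) := by
  simp [MeasurableEquiv.piFinSuccAbove_symm_apply, Fin.insertNthEquiv, Fin.insertNth_zero]


section basic
-- (assume t1 lemmas available; re-paste later)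

lemma measurable_prevCoord {k : ℕ} (j : Fin k) :
    Measurable fun t : Fin k → ℝ => prevCoord t j := by
  by_cases h : 0 < (j : ℕ) <;> simp only [prevCoord, h, dif_pos, dif_neg, not_true, not_false_iff]
  · exact measurable_pi_apply _
  · exact measurable_const

lemma measurable_diff {k : ℕ} (j : Fin k) :
    Measurable fun t : Fin k → ℝ => t j - prevCoord t j :=
  (measurable_pi_apply j).sub (measurable_prevCoord j)

def simpSet (k : ℕ) (T : ℝ) : Set (Fin k → ℝ) :=
  {t | (∀ j : Fin k, prevCoord t j < t j) ∧ ∀ j : Fin k, t j ≤ T}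

lemma measurableSet_simpSet (k : ℕ) (T : ℝ) : MeasurableSet (simpSet k T) := by
  have : simpSet k T = (⋂ j, {t : Fin k → ℝ | prevCoord t j < t j}) ∩
      ⋂ j, {t : Fin k → ℝ | t j ≤ T} := by
    ext t; simp [simpSet, Set.mem_iInter]
  rw [this]
  exact (MeasurableSet.iInter fun j =>
      measurableSet_lt (measurable_prevCoord j) (measurable_pi_apply j)).inter
    (MeasurableSet.iInter fun j => measurableSet_le (measurable_pi_apply j) measurable_const)

lemma continuous_heatKernel (s : ℝ) : Continuous (heatKernel s) := by
  unfold heatKernel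
  exact (Real.continuous_exp.comp (by continuity)).div_const _

lemma lintegral_heatKernel_sq {s : ℝ} (hs : 0 < s) :
    ∫⁻ y : ℝ, ENNReal.ofReal (heatKernel s y ^ 2)
      = ENNReal.ofReal (1 / (2 * Real.sqrt (π * s))) := by
  have h1 : ∀ y : ℝ, heatKernel s y ^ 2 = Real.exp (-(1/s) * y^2) * (1/(2*π*s)) := by
    intro y
    unfold heatKernel
    rw [div_pow, pow_two (Real.exp _), ← Real.exp_add, Real.sq_sqrt (by positivity)]
    have h2 : -y^2/(2*s) + -y^2/(2*s) = -(1/s) * y^2 := by field_simp; ring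
    rw [h2, div_eq_mul_one_div]
  simp_rw [h1]
  rw [← ofReal_integral_eq_lintegral_ofReal
    ((integrable_exp_neg_mul_sq (by positivity : (0:ℝ) < 1/s)).mul_const _)
    (ae_of_all _ fun y => by positivity)]
  congr 1
  rw [integral_mul_const, integral_gaussian]
  have h3 : π / (1/s) = π * s := by field_simp
  rw [h3]
  have h4 : (0:ℝ) < π * s := by positivity
  rw [eq_div_iff ((by positivity : (0:ℝ) < 2 * Real.sqrt (π*s)).ne')]
  have h6 : Real.sqrt (π*s) * (1/(2*π*s)) * (2*Real.sqrt (π*s))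
      = (Real.sqrt (π*s) * Real.sqrt (π*s)) * (1/(π*s)) := by ring
  rw [h6, Real.mul_self_sqrt h4.le]
  field_simp
end basic

lemma prod_cons_apply {k : ℕ} (g : Fin (k+1) → ℝ → ℝ) (a : ℝ) (r : Fin k → ℝ) :
    (∏ j : Fin (k+1), g j ((Fin.cons a r : Fin (k+1) → ℝ) j
        - prevCoord (Fin.cons a r : Fin (k+1) → ℝ) j))
      = g 0 a * ∏ i : Fin k, g i.succ ((r i - a) - prevCoord (fun m => r m - a) i) := by
  rw [Fin.prod_univ_succ, cons_sub_zero]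
  exact congrArg _ (Finset.prod_congr rfl fun i _ => by rw [cons_sub_succ])

lemma lintegral_translate {k : ℕ} (c : ℝ) (G : (Fin k → ℝ) → ℝ≥0∞) :
    ∫⁻ r : Fin k → ℝ, G (fun m => r m - c) = ∫⁻ r, G r := by
  have key := lintegral_add_right_eq_self (μ := (volume : Measure (Fin k → ℝ))) G (fun _ : Fin k => -c)
  have harg : ∀ r : Fin k → ℝ, (r + fun _ => -c) = fun m => r m - c := by
    intro r; funext m
    show r m + -c = r m - c
    exact (sub_eq_add_neg _ _).symm
  simp_rw [harg] at key
  exact key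

lemma lintegral_cons_eq {k : ℕ} (F : (Fin (k+1) → ℝ) → ℝ≥0∞) (hF : Measurable F) :
    ∫⁻ x : Fin (k+1) → ℝ, F x
      = ∫⁻ a : ℝ, ∫⁻ r : Fin k → ℝ, F (Fin.cons a r) := by
  rw [← ((volume_preserving_piFinSuccAbove (fun _ : Fin (k+1) => ℝ) 0).symm).lintegral_comp_emb
    (MeasurableEquiv.measurableEmbedding _) F]
  rw [MeasureTheory.Measure.volume_eq_prod, lintegral_prod
    (fun p : ℝ × (Fin k → ℝ) =>
      F ((MeasurableEquiv.piFinSuccAbove (fun _ : Fin (k+1) => ℝ) 0).symm p))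
    ((hF.comp (MeasurableEquiv.measurable _)).aemeasurable)]
  congr 1
  funext a
  congr 1
  funext r
  rw [hsymm]

lemma measurable_heatProdSq {k : ℕ} (σ : Fin k → ℝ) :
    Measurable fun x : Fin k → ℝ =>
      ENNReal.ofReal ((∏ j, heatKernel (σ j) (x j - prevCoord x j)) ^ 2) :=
  ENNReal.measurable_ofReal.comp <| (Finset.measurable_prod _ fun j _ =>
    (continuous_heatKernel (σ j)).measurable.comp (measurable_diff j)).pow_const 2

lemma lintegral_heatProd {k : ℕ} (σ : Fin k → ℝ) (hσ : ∀ j, 0 < σ j) :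
    ∫⁻ x : Fin k → ℝ, ENNReal.ofReal ((∏ j, heatKernel (σ j) (x j - prevCoord x j)) ^ 2)
      = ENNReal.ofReal (∏ j, 1 / (2 * Real.sqrt (π * σ j))) := by
  induction k with
  | zero =>
      simp only [Finset.univ_eq_empty, Finset.prod_empty, one_pow]
      rw [lintegral_const, volume_pi, Measure.pi_univ]
      simp
  | succ k ih =>
      rw [lintegral_cons_eq _ (measurable_heatProdSq σ)]
      have step1 : ∀ (a : ℝ) (r : Fin k → ℝ),
          ENNReal.ofReal ((∏ j, heatKernel (σ j) ((Fin.cons a r : Fin (k+1) → ℝ) j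
              - prevCoord (Fin.cons a r : Fin (k+1) → ℝ) j)) ^ 2)
          = ENNReal.ofReal (heatKernel (σ 0) a ^ 2)
            * ENNReal.ofReal ((∏ i : Fin k, heatKernel (σ i.succ)
                ((r i - a) - prevCoord (fun m => r m - a) i)) ^ 2) := by
        intro a r
        rw [prod_cons_apply (fun j v => heatKernel (σ j) v), mul_pow,
          ENNReal.ofReal_mul (sq_nonneg _)]
      simp_rw [step1]
      have step2 : ∀ a : ℝ,
          (∫⁻ r : Fin k → ℝ, ENNReal.ofReal (heatKernel (σ 0) a ^ 2)
            * ENNReal.ofReal ((∏ i : Fin k, heatKernel (σ i.succ)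
                ((r i - a) - prevCoord (fun m => r m - a) i)) ^ 2))
          = ENNReal.ofReal (heatKernel (σ 0) a ^ 2)
            * ENNReal.ofReal (∏ i : Fin k, 1 / (2 * Real.sqrt (π * σ i.succ))) := by
        intro a
        rw [lintegral_const_mul' _ _ ENNReal.ofReal_ne_top]
        congr 1
        have := lintegral_translate a (fun z : Fin k → ℝ =>
          ENNReal.ofReal ((∏ i : Fin k, heatKernel (σ i.succ) (z i - prevCoord z i)) ^ 2))
        rw [this, ih (fun i => σ i.succ) (fun i => hσ _)]
      simp_rw [step2]
      rw [lintegral_mul_const' _ _ ENNReal.ofReal_ne_top, lintegral_heatKernel_sq (hσ 0)]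
      rw [← ENNReal.ofReal_mul (by positivity), Fin.prod_univ_succ]

lemma intervalIntegrable_beta {p q T : ℝ} (hp : 0 < p) (hq : 0 < q) (hT : 0 < T) :
    IntervalIntegrable (fun x => x ^ (p-1) * (T - x) ^ (q-1)) volume 0 T := by
  apply IntervalIntegrable.trans (b := T/2)
  · apply IntervalIntegrable.mul_continuousOn
    · exact intervalIntegral.intervalIntegrable_rpow' (by linarith)
    · apply ContinuousOn.rpow_const (by fun_prop)
      intro x hx
      rw [Set.uIcc_of_le (by linarith)] at hx
      left
      have := hx.2
      intro h
      nlinarith [hx.1, hx.2]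
  · apply IntervalIntegrable.continuousOn_mul
    · have h1 := (intervalIntegral.intervalIntegrable_rpow' (r := q-1) (by linarith)
        (a := 0) (b := T/2)).comp_sub_left T
      have e1 : T - 0 = T := by ring
      have e2 : T - T/2 = T/2 := by ring
      rw [e1, e2] at h1
      exact h1.symm
    · apply ContinuousOn.rpow_const continuousOn_id
      intro x hx
      rw [Set.uIcc_of_le (by linarith)] at hx
      left
      simp only [id_eq]
      intro h
      nlinarith [hx.1]

lemma integral_beta {p q T : ℝ} (hp : 0 < p) (hq : 0 < q) (hT : 0 < T) :
    ∫ x in (0:ℝ)..T, x ^ (p-1) * (T - x) ^ (q-1)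
      = T ^ (p+q-1) * (Real.Gamma p * Real.Gamma q / Real.Gamma (p+q)) := by
  have hGpq : Real.Gamma (p+q) ≠ 0 := (Real.Gamma_pos_of_pos (by linarith)).ne'
  have hbeta : Complex.betaIntegral p q
      = (Real.Gamma p * Real.Gamma q / Real.Gamma (p+q) : ℝ) := by
    have h := Complex.Gamma_mul_Gamma_eq_betaIntegral (s := (p:ℂ)) (t := (q:ℂ))
      (by simpa using hp) (by simpa using hq)
    have hpq : ((p:ℂ) + q) = ((p+q : ℝ) : ℂ) := by push_cast; ring
    rw [hpq, Complex.Gamma_ofReal, Complex.Gamma_ofReal, Complex.Gamma_ofReal] at h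
    have hne : ((Real.Gamma (p+q) : ℂ)) ≠ 0 := by exact_mod_cast hGpq
    field_simp
    push_cast
    rw [eq_div_iff hne, h]
    ring
  have hsc := Complex.betaIntegral_scaled (p:ℂ) (q:ℂ) hT
  rw [hbeta] at hsc
  have hLHS : (∫ x in (0:ℝ)..T, (x:ℂ) ^ ((p:ℂ) - 1) * ((T:ℂ) - x) ^ ((q:ℂ) - 1))
      = ((∫ x in (0:ℝ)..T, x ^ (p-1) * (T - x) ^ (q-1) : ℝ) : ℂ) := by
    rw [show ((∫ x in (0:ℝ)..T, x ^ (p-1) * (T - x) ^ (q-1) : ℝ) : ℂ)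
        = ∫ x in (0:ℝ)..T, ((x ^ (p-1) * (T - x) ^ (q-1) : ℝ) : ℂ)
      from (RCLike.intervalIntegral_ofReal (𝕜 := ℂ)).symm]
    apply intervalIntegral.integral_congr
    intro x hx
    rw [Set.uIcc_of_le hT.le] at hx
    have hx0 : (0:ℝ) ≤ x := hx.1
    have hTx : (0:ℝ) ≤ T - x := by linarith [hx.2]
    push_cast
    rw [Complex.ofReal_cpow hx0, Complex.ofReal_cpow hTx]
    push_cast
    ring
  rw [hLHS] at hsc
  have hRHS : ((T:ℂ)) ^ ((p:ℂ) + q - 1)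
      = ((T ^ (p+q-1) : ℝ) : ℂ) := by
    rw [Complex.ofReal_cpow hT.le]
    push_cast
    ring_nf
  rw [hRHS] at hsc
  have := hsc
  rw [← Complex.ofReal_mul] at this
  exact_mod_cast this

lemma cons_mem_simpSet {k : ℕ} {T a : ℝ} {r : Fin k → ℝ} :
    (Fin.cons a r : Fin (k+1) → ℝ) ∈ simpSet (k+1) T
      ↔ ((0 < a ∧ a ≤ T) ∧ (fun m => r m - a) ∈ simpSet k (T - a)) := by
  constructor
  · rintro ⟨h1, h2⟩
    have ha : 0 < a := by
      have := h1 0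
      rwa [prevCoord_zero, Fin.cons_zero] at this
    have haT : a ≤ T := by have := h2 0; rwa [Fin.cons_zero] at this
    refine ⟨⟨ha, haT⟩, fun i => ?_, fun i => ?_⟩
    · have h := h1 i.succ
      rw [← sub_pos] at h
      rw [cons_sub_succ] at h
      rw [← sub_pos]
      exact h
    · have h := h2 i.succ
      rw [Fin.cons_succ] at h
      show r i - a ≤ T - a
      linarith
  · rintro ⟨⟨ha, haT⟩, hs, hTs⟩
    constructor
    · intro j
      refine Fin.cases ?_ ?_ j
      · rw [prevCoord_zero, Fin.cons_zero]; exact ha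
      · intro i
        rw [← sub_pos, cons_sub_succ, sub_pos]
        exact hs i
    · intro j
      refine Fin.cases ?_ ?_ j
      · rw [Fin.cons_zero]; exact haT
      · intro i
        rw [Fin.cons_succ]
        have h : r i - a ≤ T - a := hTs i
        linarith

lemma measurable_sqrtProd {k : ℕ} : Measurable fun t : Fin k → ℝ =>
    ENNReal.ofReal (∏ j, 1 / (2 * Real.sqrt (π * (t j - prevCoord t j)))) := by
  apply ENNReal.measurable_ofReal.comp
  apply Finset.measurable_prod _ fun j _ => ?_
  have h : Measurable fun t : Fin k → ℝ => 2 * Real.sqrt (π * (t j - prevCoord t j)) :=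
    (Real.continuous_sqrt.measurable.comp ((measurable_diff j).const_mul π)).const_mul 2
  exact measurable_const.div h

lemma lintegral_simplex (k : ℕ) : ∀ T : ℝ, 0 ≤ T →
    (∫⁻ t in simpSet k T,
        ENNReal.ofReal (∏ j, 1 / (2 * Real.sqrt (π * (t j - prevCoord t j)))))
      = ENNReal.ofReal (T ^ ((k:ℝ)/2) / (2^k * Real.Gamma ((k:ℝ)/2 + 1))) := by
  induction k with
  | zero =>
    intro T hT
    have hset : simpSet 0 T = Set.univ := by
      ext t; simp [simpSet]
    rw [hset, Measure.restrict_univ]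
    simp only [Finset.univ_eq_empty, Finset.prod_empty]
    rw [lintegral_const, volume_pi, Measure.pi_univ]
    norm_num [Real.Gamma_one, Real.rpow_zero]
  | succ k ih =>
    intro T hT0
    have hΓk : 0 < Real.Gamma ((k:ℝ)/2 + 1) := Real.Gamma_pos_of_pos (by positivity)
    have hΓk1 : 0 < Real.Gamma (((k:ℕ)+1:ℝ)/2 + 1) := Real.Gamma_pos_of_pos (by positivity)
    rcases hT0.eq_or_lt with h0 | hT
    · subst h0
      have hset : simpSet (k+1) (0:ℝ) = ∅ := by
        ext t
        simp only [Set.mem_empty_iff_false, iff_false]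
        rintro ⟨h1, h2⟩
        have h := h1 0
        rw [prevCoord_zero] at h
        exact absurd (h2 0) (not_le.mpr h)
      rw [hset, Measure.restrict_empty, lintegral_zero_measure,
        Real.zero_rpow (by positivity), zero_div, ENNReal.ofReal_zero]
    · -- 0 < T
      set c : ℝ := 2^k * Real.Gamma ((k:ℝ)/2 + 1) with hc
      have hcpos : 0 < c := by positivity
      set fk : (Fin k → ℝ) → ℝ≥0∞ := fun t =>
        ENNReal.ofReal (∏ j, 1 / (2 * Real.sqrt (π * (t j - prevCoord t j)))) with hfk
      rw [← lintegral_indicator (measurableSet_simpSet (k+1) T)]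
      rw [lintegral_cons_eq _ (measurable_sqrtProd.indicator (measurableSet_simpSet (k+1) T))]
      have key : ∀ (a : ℝ) (r : Fin k → ℝ),
          (simpSet (k+1) T).indicator (fun t =>
            ENNReal.ofReal (∏ j, 1 / (2 * Real.sqrt (π * (t j - prevCoord t j)))))
            (Fin.cons a r)
          = (Set.Ioc (0:ℝ) T).indicator
              (fun u => ENNReal.ofReal (1/(2*Real.sqrt (π*u)))) a
            * (simpSet k (T-a)).indicator fk (fun m => r m - a) := by
        intro a r
        by_cases hmem : (Fin.cons a r : Fin (k+1) → ℝ) ∈ simpSet (k+1) T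
        · rw [Set.indicator_of_mem hmem]
          obtain ⟨⟨ha, haT⟩, hmem'⟩ := cons_mem_simpSet.mp hmem
          rw [Set.indicator_of_mem (Set.mem_Ioc.mpr ⟨ha, haT⟩), Set.indicator_of_mem hmem']
          rw [prod_cons_apply (fun _ v => 1/(2*Real.sqrt (π*v)))]
          rw [ENNReal.ofReal_mul (by positivity)]
        · rw [Set.indicator_of_notMem hmem]
          by_cases hIoc : a ∈ Set.Ioc (0:ℝ) T
          · have hnm : (fun m => r m - a) ∉ simpSet k (T - a) := fun hmem' =>
              hmem (cons_mem_simpSet.mpr ⟨⟨hIoc.1, hIoc.2⟩, hmem'⟩)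
            rw [Set.indicator_of_notMem hnm, mul_zero]
          · rw [Set.indicator_of_notMem hIoc, zero_mul]
      simp_rw [key]
      have hne : ∀ a : ℝ, (Set.Ioc (0:ℝ) T).indicator
          (fun u => ENNReal.ofReal (1/(2*Real.sqrt (π*u)))) a ≠ ⊤ := by
        intro a
        by_cases h : a ∈ Set.Ioc (0:ℝ) T <;>
          simp [h, ENNReal.ofReal_ne_top] <;> exact ENNReal.mul_ne_top ENNReal.ofReal_ne_top (by norm_num)
      have hpoint : ∀ a : ℝ,
          (∫⁻ r : Fin k → ℝ, (Set.Ioc (0:ℝ) T).indicator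
              (fun u => ENNReal.ofReal (1/(2*Real.sqrt (π*u)))) a
            * (simpSet k (T-a)).indicator fk (fun m => r m - a))
          = (Set.Ioc (0:ℝ) T).indicator (fun u =>
              ENNReal.ofReal (1/(2*Real.sqrt (π*u)) * ((T-u) ^ ((k:ℝ)/2) / c))) a := by
        intro a
        rw [lintegral_const_mul' _ _ (hne a)]
        rw [lintegral_translate a ((simpSet k (T-a)).indicator fk)]
        rw [lintegral_indicator (measurableSet_simpSet k (T-a))]
        by_cases hIoc : a ∈ Set.Ioc (0:ℝ) T
        · rw [Set.indicator_of_mem hIoc, Set.indicator_of_mem hIoc]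
          rw [hfk]
          rw [ih (T-a) (by linarith [hIoc.2])]
          rw [← ENNReal.ofReal_mul (by positivity)]
        · rw [Set.indicator_of_notMem hIoc, Set.indicator_of_notMem hIoc, zero_mul]
      simp_rw [hpoint]
      rw [lintegral_indicator measurableSet_Ioc]
      have hpt : ∀ x ∈ Set.Ioc (0:ℝ) T,
          1/(2*Real.sqrt (π*x)) * ((T-x) ^ ((k:ℝ)/2) / c)
          = (1/(2*Real.sqrt π*c)) * (x ^ ((1:ℝ)/2-1) * (T-x) ^ (((k:ℝ)/2+1)-1)) := by
        intro x hx
        have hx0 : 0 < x := hx.1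
        have e1 : (1:ℝ)/2 - 1 = -(1/2) := by norm_num
        have e2 : ((k:ℝ)/2+1) - 1 = (k:ℝ)/2 := by ring
        rw [e1, e2, Real.rpow_neg hx0.le, Real.sqrt_mul Real.pi_pos.le,
          Real.sqrt_eq_rpow x]
        have hxr : (0:ℝ) < x ^ ((1:ℝ)/2) := Real.rpow_pos_of_pos hx0 _
        have hπ : (0:ℝ) < Real.sqrt π := Real.sqrt_pos.mpr Real.pi_pos
        have halg : ∀ P X Y C : ℝ, P ≠ 0 → X ≠ 0 → C ≠ 0 →
            1/(2*(P*X)) * (Y/C) = 1/(2*P*C) * (X⁻¹ * Y) := by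
          intro P X Y C hP hX hC
          field_simp
        exact halg _ _ _ _ hπ.ne' hxr.ne' hcpos.ne'
      have hq : (0:ℝ) < (k:ℝ)/2 + 1 := by positivity
      have hint : IntegrableOn (fun x : ℝ =>
          1/(2*Real.sqrt (π*x)) * ((T-x) ^ ((k:ℝ)/2) / c)) (Set.Ioc 0 T) := by
        have hb := (intervalIntegrable_beta one_half_pos hq hT).const_mul
          (1/(2*Real.sqrt π*c))
        rw [intervalIntegrable_iff_integrableOn_Ioc_of_le hT.le] at hb
        exact hb.congr_fun (fun x hx => (hpt x hx).symm) measurableSet_Ioc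
      rw [← ofReal_integral_eq_lintegral_ofReal hint
        (ae_restrict_of_forall_mem measurableSet_Ioc fun x hx =>
          mul_nonneg (by positivity)
            (div_nonneg (Real.rpow_nonneg (by linarith [hx.2]) _) hcpos.le))]
      congr 1
      rw [← intervalIntegral.integral_of_le hT.le]
      have hconv : (∫ x in (0:ℝ)..T, 1/(2*Real.sqrt (π*x)) * ((T-x) ^ ((k:ℝ)/2) / c))
          = (1/(2*Real.sqrt π*c))
            * ∫ x in (0:ℝ)..T, x ^ ((1:ℝ)/2-1) * (T-x) ^ (((k:ℝ)/2+1)-1) := by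
        rw [← intervalIntegral.integral_const_mul]
        apply intervalIntegral.integral_congr_ae
        filter_upwards with x hx
        rw [Set.uIoc_of_le hT.le] at hx
        exact hpt x hx
      rw [hconv, integral_beta one_half_pos hq hT]
      have eexp : (1:ℝ)/2 + ((k:ℝ)/2+1) - 1 = ((k:ℝ)+1)/2 := by ring
      have earg : (1:ℝ)/2 + ((k:ℝ)/2+1) = ((k:ℝ)+1)/2 + 1 := by ring
      rw [eexp, earg, Real.Gamma_one_half_eq]
      have hπ : (0:ℝ) < Real.sqrt π := Real.sqrt_pos.mpr Real.pi_pos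
      rw [hc]
      push_cast
      field_simp
      ring

lemma measurable_sqrtProdReal {k : ℕ} : Measurable fun t : Fin k → ℝ =>
    ∏ j, 1 / (2 * Real.sqrt (π * (t j - prevCoord t j))) := by
  apply Finset.measurable_prod _ fun j _ => ?_
  have h : Measurable fun t : Fin k → ℝ => 2 * Real.sqrt (π * (t j - prevCoord t j)) :=
    (Real.continuous_sqrt.measurable.comp ((measurable_diff j).const_mul π)).const_mul 2
  exact measurable_const.div h

lemma inner_integral {k : ℕ} {t : Fin k → ℝ} (ht : ∀ j, prevCoord t j < t j) :
    ∫ x : Fin k → ℝ, heatKernelProd k t x ^ 2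
      = ∏ j, 1 / (2 * Real.sqrt (π * (t j - prevCoord t j))) := by
  have hm : Measurable fun x : Fin k → ℝ => heatKernelProd k t x ^ 2 := by
    unfold heatKernelProd
    exact (Finset.measurable_prod _ fun j _ =>
      (continuous_heatKernel _).measurable.comp (measurable_diff j)).pow_const 2
  rw [integral_eq_lintegral_of_nonneg_ae (ae_of_all _ fun x => sq_nonneg _)
    hm.aestronglyMeasurable]
  have h := lintegral_heatProd (fun j => t j - prevCoord t j)
    (fun j => sub_pos.mpr (ht j))
  simp only [heatKernelProd]
  rw [h, ENNReal.toReal_ofReal]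
  exact Finset.prod_nonneg fun j _ => by positivity

theorem heatKernelProd_sq_integral (k : ℕ) :
    (∫ t in orderedSimplex k, ∫ x : Fin k → ℝ, heatKernelProd k t x ^ 2) =
      1 / (2 ^ k * Real.Gamma ((k : ℝ) / 2 + 1)) := by
  have hS : orderedSimplex k = simpSet k 1 := rfl
  rw [hS]
  rw [setIntegral_congr_fun (measurableSet_simpSet k 1) (fun t ht => inner_integral ht.1)]
  rw [integral_eq_lintegral_of_nonneg_ae
    (ae_of_all _ fun t => Finset.prod_nonneg fun j _ => by positivity)
    measurable_sqrtProdReal.aestronglyMeasurable]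
  rw [lintegral_simplex k 1 zero_le_one, Real.one_rpow, ENNReal.toReal_ofReal]
  have hΓ : 0 < Real.Gamma ((k:ℝ)/2 + 1) := Real.Gamma_pos_of_pos (by positivity)
  positivity
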